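/- The real projective plane ℝP², equipped with its standard ℤ₂²-action, admits a ℤ₂²-equivariant triangulation with exactly 6 vertices, none of which is a fixed point of the action. -/

import Mathlib

open Geometry
open scoped LinearAlgebra.Projectivization

/-- A *triangulation* of a topological space `M`: a finite geometric simplicial complex in some
real Euclidean space together with a homeomorphism from its underlying polyhedron (the union of
its simplices, with the subspace topology) to `M`. -/
structure Triangulation (M : Type*) [TopologicalSpace M] where
  /-- the dimension of the ambient Euclidean space -/
  dim : ℕ
  /-- the simplicial complex -/
  complex : Geometry.SimplicialComplex ℝ (EuclideanSpace ℝ (Fin dim))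
  /-- the complex has finitely many faces -/
  finite_faces : complex.faces.Finite
  /-- a homeomorphism from the polyhedron to `M` -/
  homeo : complex.space ≃ₜ M

/-- A triangulation `T` of `M` is *equivariant* with respect to an action `ρ` of `G` on `M` if
for each `g : G` the self-map `h⁻¹ ∘ (ρ g) ∘ h` of the polyhedron maps each geometric simplex of
the complex onto a geometric simplex of the complex. -/
def Triangulation.IsEquivariant {M : Type*} [TopologicalSpace M] {G : Type*}
    (ρ : G → M → M) (T : Triangulation M) : Prop :=
  ∀ g : G, ∀ s ∈ T.complex.faces, ∃ t ∈ T.complex.faces,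
    (fun x : T.complex.space =>
        (T.homeo.symm (ρ g (T.homeo x)) : EuclideanSpace ℝ (Fin T.dim))) ''
      {x : T.complex.space |
        (x : EuclideanSpace ℝ (Fin T.dim)) ∈ convexHull ℝ (s : Set (EuclideanSpace ℝ (Fin T.dim)))}
      = convexHull ℝ (t : Set (EuclideanSpace ℝ (Fin T.dim)))

/-- The number of `i`-dimensional simplices of a triangulation (simplices with `i + 1` vertices). -/
noncomputable def Triangulation.fvec {M : Type*} [TopologicalSpace M] (T : Triangulation M)
    (i : ℕ) : ℕ :=
  {s ∈ T.complex.faces | s.card = i + 1}.ncard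

/-- The projectivization of a topological vector space carries the quotient topology. -/
instance Projectivization.instTopologicalSpace {K V : Type*} [DivisionRing K] [AddCommGroup V]
    [Module K V] [TopologicalSpace V] : TopologicalSpace (ℙ K V) :=
  inferInstanceAs (TopologicalSpace (Quotient (projectivizationSetoid K V)))

/-- The sign `(−1)^a` attached to an element `a` of `ℤ/2`. -/
noncomputable def sgn (a : ZMod 2) : ℝ := if a = 0 then 1 else -1

lemma sgn_ne_zero (a : ZMod 2) : sgn a ≠ 0 := by unfold sgn; split <;> norm_num

/-- Rescaling each coordinate by a nonzero scalar, as a linear equivalence. -/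
noncomputable def scaleEquiv {ι : Type*} (ε : ι → ℝ) (hε : ∀ i, ε i ≠ 0) :
    (ι → ℝ) ≃ₗ[ℝ] (ι → ℝ) where
  toFun v i := ε i * v i
  invFun v i := (ε i)⁻¹ * v i
  left_inv v := by
    funext i; show (ε i)⁻¹ * (ε i * v i) = v i
    rw [← mul_assoc, inv_mul_cancel₀ (hε i), one_mul]
  right_inv v := by
    funext i; show ε i * ((ε i)⁻¹ * v i) = v i
    rw [← mul_assoc, mul_inv_cancel₀ (hε i), one_mul]
  map_add' u v := by funext i; simp [Pi.add_apply]; ring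
  map_smul' c v := by funext i; simp [Pi.smul_apply, smul_eq_mul]; ring

/-- The sign vector `(1, (−1)^{g₁}, …, (−1)^{gₙ})` attached to `g ∈ ℤ₂ⁿ`. -/
noncomputable def stdSign (n : ℕ) (g : Fin n → ZMod 2) : Fin (n + 1) → ℝ :=
  Fin.cons 1 fun j => sgn (g j)

lemma stdSign_ne_zero (n : ℕ) (g : Fin n → ZMod 2) : ∀ i, stdSign n g i ≠ 0 := by
  intro i
  induction i using Fin.cases with
  | zero => simp [stdSign]
  | succ j => simp [stdSign, sgn_ne_zero]

/-- The standard action of `ℤ₂ⁿ` on `ℝPⁿ = ℙ(ℝ^{n+1})`: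
`(g₁,…,gₙ) · [x₀:x₁:…:xₙ] = [x₀:(−1)^{g₁}x₁:…:(−1)^{gₙ}xₙ]`. -/
noncomputable def rpStdAction (n : ℕ) (g : Fin n → ZMod 2) :
    ℙ ℝ (Fin (n + 1) → ℝ) → ℙ ℝ (Fin (n + 1) → ℝ) :=
  Projectivization.map ((scaleEquiv (stdSign n g) (stdSign_ne_zero n g)).toLinearMap)
    (scaleEquiv (stdSign n g) (stdSign_ne_zero n g)).injective

/-- The standard action of `ℤ₂² = ℤ/2 × ℤ/2` on the real projective plane
`ℝP² = ℙ(ℝ³)`: `(g₁,g₂) · [x₀:x₁:x₂] = [x₀:(−1)^{g₁}x₁:(−1)^{g₂}x₂]`. -/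
noncomputable def rp2StdAction (g : ZMod 2 × ZMod 2) :
    ℙ ℝ (Fin 3 → ℝ) → ℙ ℝ (Fin 3 → ℝ) :=
  rpStdAction 2 ![g.1, g.2]

/-!
The twelve points obtained from `(0, ±1, ±2)` by cyclically permuting the coordinates are the
vertices of a convex icosahedron `Q ⊂ ℝ³` (the regular one has `(0, ±1, ±φ)` instead), and `Q`
is invariant under all coordinate sign changes. Radial projection of `∂Q` followed by the
antipodal quotient triangulates `ℝP²` as the six-vertex hemi-icosahedron, on which `ℤ₂²` acts
simplicially because it preserves `Q`.

A point with barycentric coordinates `x` on (a lift of) facet `k` is sent to `[∑ x_c u_{k,c}]`.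
This is injective because the facet functional `n_k` takes its maximum `1` over `Q` exactly on
facet `k`, and surjective because, for `[v]` with `|n_k v|` maximal, the barycentric coordinates of
`v` in facet `k` are nonnegative. The vertices `[0:1:±2]`, `[±2:0:1]`, `[1:±2:0]` each have two
nonzero coordinates of which some group element flips exactly one, so no vertex is fixed.
-/

namespace Projectivization

open Matrix

lemma map_scaleEquiv_mk_ne {ι : Type*} {ε : ι → ℝ} (hε : ∀ i, ε i ≠ 0)
    {v : ι → ℝ} (hv : v ≠ 0) {i j : ι} (hi : v i ≠ 0) (hj : v j ≠ 0) (hij : ε i ≠ ε j) :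
    map (scaleEquiv ε hε).toLinearMap (scaleEquiv ε hε).injective (mk ℝ v hv) ≠ mk ℝ v hv := by
  rw [map_mk, Ne, mk_eq_mk_iff']
  rintro ⟨a, ha⟩
  have hai : a = ε i := mul_right_cancel₀ hi (congrFun ha i)
  have haj : a = ε j := mul_right_cancel₀ hj (congrFun ha j)
  exact hij (hai.symm.trans haj)

variable {ι : Type*} [Fintype ι]

noncomputable def lineProjection (v : ι → ℝ) : Matrix ι ι ℝ := (v ⬝ᵥ v)⁻¹ • vecMulVec v v

lemma lineProjection_smul (v : ι → ℝ) {a : ℝ} (ha : a ≠ 0) :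
    lineProjection (a • v) = lineProjection v := by
  simp only [lineProjection, smul_vecMulVec, vecMulVec_smul, dotProduct_smul,
    smul_dotProduct, smul_smul, smul_eq_mul]
  congr 1
  field_simp

lemma lineProjection_mulVec (v w : ι → ℝ) :
    lineProjection v *ᵥ w = ((v ⬝ᵥ w) / (v ⬝ᵥ v)) • v := by
  simp [lineProjection, smul_mulVec, vecMulVec_mulVec, smul_smul, div_eq_inv_mul]

lemma exists_eq_smul_of_lineProjection_eq {v w : ι → ℝ} (hw : w ≠ 0)
    (h : lineProjection v = lineProjection w) : ∃ a : ℝ, w = a • v := by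
  refine ⟨(v ⬝ᵥ w) / (v ⬝ᵥ v), ?_⟩
  rw [← lineProjection_mulVec, h, lineProjection_mulVec,
    div_self (dotProduct_self_eq_zero.not.2 hw), one_smul]

instance t2Space_pi : T2Space (ℙ ℝ (ι → ℝ)) := by
  let f : ℙ ℝ (ι → ℝ) → Matrix ι ι ℝ :=
    Quotient.lift (fun v => lineProjection v.1) fun v w ⟨a, ha⟩ => by
      rw [← ha]; exact lineProjection_smul _ a.ne_zero
  refine T2Space.of_injective_continuous (f := f) ?_ ?_
  · intro p q
    induction p using Projectivization.ind with | h v hv =>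
    induction q using Projectivization.ind with | h w hw =>
    intro h
    obtain ⟨a, rfl⟩ := exists_eq_smul_of_lineProjection_eq hw h
    exact ((mk_eq_mk_iff' ℝ _ _ hw hv).2 ⟨a, rfl⟩).symm
  · refine Continuous.quotient_lift ?_ _
    have hval := continuous_subtype_val (p := fun v : ι → ℝ => v ≠ 0)
    exact ((hval.dotProduct hval).inv₀ fun v => dotProduct_self_eq_zero.not.2 v.2).smul
      (hval.matrix_vecMulVec hval)

end Projectivization

namespace Geometry.SimplicialComplex

variable {E : Type*} [NormedAddCommGroup E] [NormedSpace ℝ E]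

lemma isCompact_space {K : SimplicialComplex ℝ E} (hK : K.faces.Finite) : IsCompact K.space :=
  hK.isCompact_biUnion fun s _ => s.finite_toSet.isCompact_convexHull ℝ

end Geometry.SimplicialComplex

section FacetComplex

open Geometry

variable {V κ : Type*} [DecidableEq V]

lemma EuclideanSpace.single_left_injective {b : ℝ} (hb : b ≠ 0) :
    Function.Injective fun c : V => EuclideanSpace.single c b := by
  intro a a' h
  by_contra haa'
  simpa [haa', hb] using congrArg (fun x : EuclideanSpace ℝ V => x a) h

variable [Fintype V]

def basisSimplex (S : Finset V) : Set (EuclideanSpace ℝ V) :=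
  {x | (∀ c, 0 ≤ x c) ∧ ∑ c, x c = 1 ∧ ∀ c ∉ S, x c = 0}

lemma convexHull_image_single_eq_basisSimplex (S : Finset V) :
    convexHull ℝ ↑(S.image fun c => EuclideanSpace.single c (1 : ℝ)) = basisSimplex S := by
  apply subset_antisymm
  · refine convexHull_min ?_ ?_
    · simp only [Finset.coe_image, Set.image_subset_iff]
      intro c hc
      refine ⟨fun d => ?_, ?_, fun d hd => ?_⟩
      · simp only [PiLp.single_apply]; split_ifs <;> norm_num
      · simp [PiLp.single_apply]
      · simp [show d ≠ c from fun h => hd (h ▸ hc)]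
    · rintro x ⟨hx0, hx1, hxS⟩ y ⟨hy0, hy1, hyS⟩ a b ha hb hab
      refine ⟨fun c => ?_, ?_, fun c hc => ?_⟩
      · simp only [PiLp.add_apply, PiLp.smul_apply, smul_eq_mul]
        exact add_nonneg (mul_nonneg ha (hx0 c)) (mul_nonneg hb (hy0 c))
      · simp [Finset.sum_add_distrib, ← Finset.mul_sum, hx1, hy1, hab]
      · simp [hxS c hc, hyS c hc]
  · rintro x ⟨hx0, hx1, hxS⟩
    have hS : ∑ c ∈ S, x c = 1 := by
      rw [← hx1]; exact Finset.sum_subset (Finset.subset_univ S) fun c _ hc => hxS c hc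
    have hx : S.centerMass (fun c => x c) (fun c => EuclideanSpace.single c (1 : ℝ)) = x := by
      rw [Finset.centerMass_eq_of_sum_1 _ _ hS]
      ext d
      by_cases hd : d ∈ S <;> simp [Pi.single_apply, hd, hxS]
    rw [← hx]
    exact S.centerMass_mem_convexHull (fun c _ => hx0 c) (hS ▸ one_pos)
      fun c hc => Finset.mem_coe.2 (Finset.mem_image_of_mem _ hc)

lemma isClosed_basisSimplex (S : Finset V) : IsClosed (basisSimplex S) := by
  rw [← convexHull_image_single_eq_basisSimplex]
  exact ((Finset.finite_toSet _).isCompact_convexHull ℝ).isClosed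

def facetComplex (F : κ → Finset V) : SimplicialComplex ℝ (EuclideanSpace ℝ V) where
  faces := {s | ∃ k, ∃ S ⊆ F k, S.Nonempty ∧ s = S.image fun c => EuclideanSpace.single c 1}
  isRelLowerSet_faces := by
    rintro _ ⟨k, S, hSF, hS, rfl⟩
    refine ⟨hS.image _, fun t hts ht => ?_⟩
    obtain ⟨T, hTS, rfl⟩ := Finset.subset_image_iff.1 hts
    exact ⟨k, T, hTS.trans hSF, Finset.image_nonempty.1 ht, rfl⟩
  indep := by
    rintro _ ⟨k, S, -, -, rfl⟩
    have := (EuclideanSpace.basisFun V ℝ).toBasis.linearIndependent.affineIndependent.range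
    refine this.mono ?_
    rw [Finset.coe_image]
    rintro _ ⟨c, -, rfl⟩
    exact ⟨c, by simp⟩
  inter_subset_convexHull := by
    rintro _ _ ⟨k, S, -, -, rfl⟩ ⟨k', T, -, -, rfl⟩
    rw [← Finset.coe_inter,
      ← Finset.image_inter _ _ (EuclideanSpace.single_left_injective one_ne_zero),
      convexHull_image_single_eq_basisSimplex, convexHull_image_single_eq_basisSimplex,
      convexHull_image_single_eq_basisSimplex]
    rintro x ⟨⟨hx0, hx1, hxS⟩, -, -, hxT⟩
    refine ⟨hx0, hx1, fun c hc => ?_⟩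
    by_cases hcS : c ∈ S
    · exact hxT c fun hcT => hc (Finset.mem_inter.2 ⟨hcS, hcT⟩)
    · exact hxS c hcS

variable (F : κ → Finset V)

lemma facetComplex_faces_finite : (facetComplex F).faces.Finite :=
  (Set.finite_range fun S : Finset V =>
    S.image fun c => (EuclideanSpace.single c 1 : EuclideanSpace ℝ V)).subset
    fun _ ⟨_, S, _, _, hs⟩ => ⟨S, hs.symm⟩

lemma mem_facetComplex_space_iff {x : EuclideanSpace ℝ V} :
    x ∈ (facetComplex F).space ↔ ∃ k, x ∈ basisSimplex (F k) := by
  simp_rw [SimplicialComplex.mem_space_iff, ← convexHull_image_single_eq_basisSimplex]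
  constructor
  · rintro ⟨_, ⟨k, S, hSF, -, rfl⟩, hx⟩
    exact ⟨k, convexHull_mono (Finset.coe_subset.2 (Finset.image_subset_image hSF)) hx⟩
  · rintro ⟨k, hx⟩
    have hne : (F k).Nonempty := by
      by_contra h
      simp [Finset.not_nonempty_iff_eq_empty.1 h] at hx
    exact ⟨_, ⟨k, F k, subset_rfl, hne, rfl⟩, hx⟩

lemma facetComplex_vertices :
    (facetComplex F).vertices =
      (fun c => (EuclideanSpace.single c 1 : EuclideanSpace ℝ V)) '' {c | ∃ k, c ∈ F k} := by
  ext x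
  simp only [SimplicialComplex.vertices, facetComplex, Set.mem_image]
  constructor
  · rintro ⟨k, S, hSF, ⟨c, hc⟩, hS⟩
    have hcx : EuclideanSpace.single c (1 : ℝ) ∈ ({x} : Finset _) :=
      hS ▸ Finset.mem_image_of_mem _ hc
    exact ⟨c, ⟨k, hSF hc⟩, Finset.mem_singleton.1 hcx⟩
  · rintro ⟨c, ⟨k, hc⟩, rfl⟩
    exact ⟨k, {c}, Finset.singleton_subset_iff.2 hc, Finset.singleton_nonempty c, by simp⟩

end FacetComplex

open Classical in
/-- A centrally symmetric simplicial polytope with vertices `± vertex c`, listed facet by facet up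
to sign: facet `k` has the vertices `facetVertex k c ≠ 0`, each equal to `± vertex c`, with
barycentric coordinate functionals `dual k c` and facet hyperplane `normal k = 1`. Convexity is
certified by `|normal k| ≤ 1` on all vertices, with equality only at the vertices of facet `k`,
and by a neighbouring facet across each ridge. -/
structure SymmetricSimplicialPolytope (V κ E : Type*) [Fintype V] [AddCommGroup E]
    [Module ℝ E] where
  vertex : V → E
  facetVertex : κ → V → E
  dual : κ → V → Module.Dual ℝ E
  normal : κ → Module.Dual ℝ E
  facetVertex_eq : ∀ k c,
    facetVertex k c = 0 ∨ facetVertex k c = vertex c ∨ facetVertex k c = -vertex c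
  dual_facetVertex : ∀ k c d,
    dual k c (facetVertex k d) = if c = d ∧ facetVertex k c ≠ 0 then 1 else 0
  sum_dual_smul_facetVertex : ∀ k v, ∑ c, dual k c v • facetVertex k c = v
  normal_facetVertex : ∀ k c, facetVertex k c ≠ 0 → normal k (facetVertex k c) = 1
  abs_normal_vertex_le : ∀ k c, |normal k (vertex c)| ≤ 1
  facetVertex_eq_of_normal_eq_one : ∀ k c v,
    (v = vertex c ∨ v = -vertex c) → normal k v = 1 → facetVertex k c = v
  exists_facetVertex_eq_smul : ∀ k k', ∃ e : ℝ, ∀ c,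
    facetVertex k c ≠ 0 → facetVertex k' c ≠ 0 → facetVertex k c = e • facetVertex k' c
  exists_neighbor : ∀ k c, facetVertex k c ≠ 0 → ∃ k', ∃ s : ℝ, (s = 1 ∨ s = -1) ∧
    (∀ d, d ≠ c → facetVertex k d ≠ 0 → s * normal k' (facetVertex k d) = 1) ∧
    s * normal k' (facetVertex k c) < 1

namespace SymmetricSimplicialPolytope

section Polytope

variable {V κ E : Type*} [Fintype V] [AddCommGroup E] [Module ℝ E]
  (P : SymmetricSimplicialPolytope V κ E)

open Classical in
noncomputable def facet (k : κ) : Finset V := {c | P.facetVertex k c ≠ 0}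

noncomputable def facetVector (k : κ) (x : EuclideanSpace ℝ V) : E :=
  ∑ c, x c • P.facetVertex k c

variable {P}

lemma mem_facet {k : κ} {c : V} : c ∈ P.facet k ↔ P.facetVertex k c ≠ 0 := by
  simp [facet]

lemma eq_zero_of_mem_basisSimplex {k : κ} {x : EuclideanSpace ℝ V}
    (hx : x ∈ basisSimplex (P.facet k)) {c : V} (hc : P.facetVertex k c = 0) : x c = 0 :=
  hx.2.2 c (by simpa [mem_facet] using hc)

lemma dual_facetVector {k : κ} {c : V} (hc : P.facetVertex k c ≠ 0) (x : EuclideanSpace ℝ V) :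
    P.dual k c (P.facetVector k x) = x c := by
  simp only [facetVector, map_sum, map_smul, P.dual_facetVertex, smul_eq_mul]
  rw [Finset.sum_eq_single c (fun d _ hdc => by rw [if_neg fun h => hdc h.1.symm, mul_zero])
    (by simp), if_pos ⟨rfl, hc⟩, mul_one]

lemma facetVector_injOn (k : κ) : Set.InjOn (P.facetVector k) (basisSimplex (P.facet k)) := by
  intro x hx y hy hxy
  ext c
  by_cases hc : P.facetVertex k c = 0
  · rw [eq_zero_of_mem_basisSimplex hx hc, eq_zero_of_mem_basisSimplex hy hc]
  · simpa [dual_facetVector hc] using congrArg (P.dual k c) hxy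

lemma normal_facetVector {k : κ} {x : EuclideanSpace ℝ V} (hx : x ∈ basisSimplex (P.facet k)) :
    P.normal k (P.facetVector k x) = 1 := by
  rw [facetVector, map_sum, ← hx.2.1]
  refine Finset.sum_congr rfl fun c _ => ?_
  by_cases hc : P.facetVertex k c = 0
  · simp [hc, eq_zero_of_mem_basisSimplex hx hc]
  · simp [P.normal_facetVertex k c hc]

lemma facetVector_ne_zero {k : κ} {x : EuclideanSpace ℝ V} (hx : x ∈ basisSimplex (P.facet k)) :
    P.facetVector k x ≠ 0 := by
  intro h
  simpa [h] using normal_facetVector hx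

lemma abs_normal_facetVertex_le (k k' : κ) (c : V) : |P.normal k (P.facetVertex k' c)| ≤ 1 := by
  rcases P.facetVertex_eq k' c with h | h | h <;> simp [h, P.abs_normal_vertex_le]

lemma abs_normal_facetVector_le (k : κ) {k' : κ} {x : EuclideanSpace ℝ V}
    (hx : x ∈ basisSimplex (P.facet k')) : |P.normal k (P.facetVector k' x)| ≤ 1 := by
  rw [facetVector, map_sum, ← hx.2.1]
  refine (Finset.abs_sum_le_sum_abs _ _).trans (Finset.sum_le_sum fun c _ => ?_)
  rw [map_smul, smul_eq_mul, abs_mul, abs_of_nonneg (hx.1 c)]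
  exact mul_le_of_le_one_right (hx.1 c) (abs_normal_facetVertex_le k k' c)

lemma exists_facetVector_eq_smul {k k' : κ} {x : EuclideanSpace ℝ V}
    (hx : x ∈ basisSimplex (P.facet k)) (hx' : x ∈ basisSimplex (P.facet k')) :
    ∃ e : ℝ, P.facetVector k x = e • P.facetVector k' x := by
  obtain ⟨e, he⟩ := P.exists_facetVertex_eq_smul k k'
  refine ⟨e, ?_⟩
  simp only [facetVector, Finset.smul_sum]
  refine Finset.sum_congr rfl fun c _ => ?_
  by_cases hc : P.facetVertex k c = 0
  · simp [eq_zero_of_mem_basisSimplex hx hc]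
  by_cases hc' : P.facetVertex k' c = 0
  · simp [eq_zero_of_mem_basisSimplex hx' hc']
  rw [he c hc hc', smul_comm]

/-- `normal k` attains its maximum `1` over the polytope exactly on facet `k`. -/
lemma facetVertex_eq_smul_of_facetVector_eq_smul {k k' : κ} {x x' : EuclideanSpace ℝ V}
    (hx : x ∈ basisSimplex (P.facet k)) (hx' : x' ∈ basisSimplex (P.facet k')) {a : ℝ}
    (h : P.facetVector k x = a • P.facetVector k' x') {c : V} (hc : x' c ≠ 0) :
    P.facetVertex k c = a • P.facetVertex k' c := by
  have ha : |a| ≤ 1 := by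
    simpa [h, normal_facetVector hx'] using abs_normal_facetVector_le k' hx
  have hle : ∀ d, a * P.normal k (P.facetVertex k' d) ≤ 1 := fun d =>
    (le_abs_self _).trans (by
      rw [abs_mul]; exact mul_le_one₀ ha (abs_nonneg _) (abs_normal_facetVertex_le k k' d))
  have hsum : ∑ d, x' d * (a * P.normal k (P.facetVertex k' d)) = ∑ d, x' d := by
    rw [hx'.2.1, ← normal_facetVector hx, h, map_smul, facetVector, map_sum, smul_eq_mul,
      Finset.mul_sum]
    simp only [map_smul, smul_eq_mul]
    exact Finset.sum_congr rfl fun d _ => by ring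
  have hnormal : a * P.normal k (P.facetVertex k' c) = 1 := by
    have := (Finset.sum_eq_sum_iff_of_le fun d _ =>
      mul_le_of_le_one_right (hx'.1 d) (hle d)).1 hsum c (Finset.mem_univ c)
    exact (mul_right_inj' hc).1 (this.trans (mul_one _).symm)
  have ha1 : a = 1 ∨ a = -1 := by
    refine abs_eq (zero_le_one' ℝ) |>.1 (le_antisymm ha ?_)
    calc 1 = |a| * |P.normal k (P.facetVertex k' c)| := by rw [← abs_mul, hnormal, abs_one]
      _ ≤ |a| * 1 := by gcongr; exact abs_normal_facetVertex_le k k' c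
      _ = |a| := mul_one _
  refine P.facetVertex_eq_of_normal_eq_one k c _ ?_ (by rw [map_smul, smul_eq_mul, hnormal])
  rcases P.facetVertex_eq k' c with h0 | h0 | h0
  · simp [h0] at hnormal
  all_goals rcases ha1 with rfl | rfl <;> simp [h0]

lemma eq_of_facetVector_eq_smul {k k' : κ} {x x' : EuclideanSpace ℝ V}
    (hx : x ∈ basisSimplex (P.facet k)) (hx' : x' ∈ basisSimplex (P.facet k')) {a : ℝ}
    (h : P.facetVector k x = a • P.facetVector k' x') : x = x' := by
  have hshared (c : V) (hc : x' c ≠ 0) : P.facetVertex k c = a • P.facetVertex k' c :=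
    facetVertex_eq_smul_of_facetVector_eq_smul hx hx' h hc
  have hx'k : x' ∈ basisSimplex (P.facet k) := by
    refine ⟨hx'.1, hx'.2.1, fun c hc => ?_⟩
    by_contra hc'
    have h0 := hshared c hc'
    have ha : a ≠ 0 := by rintro rfl; simp [facetVector_ne_zero hx] at h
    refine hc (mem_facet.2 ?_)
    rw [h0]
    exact smul_ne_zero ha (by simpa [mem_facet] using mt (eq_zero_of_mem_basisSimplex hx') hc')
  refine facetVector_injOn k hx hx'k ?_
  rw [h, facetVector, facetVector, Finset.smul_sum]
  refine Finset.sum_congr rfl fun c _ => ?_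
  by_cases hc : x' c = 0
  · simp [hc]
  · rw [hshared c hc, smul_comm]

lemma dual_eq_zero {k : κ} {c : V} (hc : P.facetVertex k c = 0) : P.dual k c = 0 := by
  ext v
  rw [← P.sum_dual_smul_facetVertex k v, map_sum]
  refine Finset.sum_eq_zero fun d _ => ?_
  rw [map_smul, P.dual_facetVertex, if_neg fun h => h.2 hc, smul_zero]

lemma sum_dual_apply (k : κ) (v : E) : ∑ c, P.dual k c v = P.normal k v := by
  conv_rhs => rw [← P.sum_dual_smul_facetVertex k v]
  rw [map_sum]
  refine Finset.sum_congr rfl fun c _ => ?_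
  by_cases hc : P.facetVertex k c = 0
  · simp [hc, dual_eq_zero hc]
  · rw [map_smul, P.normal_facetVertex k c hc, smul_eq_mul, mul_one]

/-- Compare with the neighbouring facet across the ridge opposite to `c`. -/
lemma dual_nonneg_of_abs_normal_le {k : κ} {v : E} (hmax : ∀ k', |P.normal k' v| ≤ P.normal k v)
    (c : V) : 0 ≤ P.dual k c v := by
  classical
  by_cases hc : P.facetVertex k c = 0
  · simp [dual_eq_zero hc]
  obtain ⟨k', s, hs, hridge, hopp⟩ := P.exists_neighbor k c hc
  have hrest (d : V) (hd : d ≠ c) :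
      P.dual k d v * (s * P.normal k' (P.facetVertex k d)) = P.dual k d v := by
    by_cases hd0 : P.facetVertex k d = 0
    · simp [dual_eq_zero hd0]
    · rw [hridge d hd hd0, mul_one]
  have hexpand : s * P.normal k' v =
      P.normal k v - P.dual k c v * (1 - s * P.normal k' (P.facetVertex k c)) := by
    calc s * P.normal k' v = ∑ d, P.dual k d v * (s * P.normal k' (P.facetVertex k d)) := by
          conv_lhs => rw [← P.sum_dual_smul_facetVertex k v]
          simp only [map_sum, map_smul, smul_eq_mul, Finset.mul_sum]
          exact Finset.sum_congr rfl fun d _ => by ring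
      _ = ∑ d, P.dual k d v - P.dual k c v * (1 - s * P.normal k' (P.facetVertex k c)) := by
          rw [← Finset.add_sum_erase _ _ (Finset.mem_univ c),
            ← Finset.add_sum_erase _ _ (Finset.mem_univ c),
            Finset.sum_congr rfl fun d hd => hrest d (Finset.ne_of_mem_erase hd)]
          ring
      _ = _ := by rw [sum_dual_apply]
  have hs_le : s * P.normal k' v ≤ P.normal k v := by
    rcases hs with rfl | rfl
    · simpa using (le_abs_self _).trans (hmax k')
    · simpa using (neg_le_abs _).trans (hmax k')
  nlinarith

lemma exists_mem_basisSimplex_facetVector_eq_smul {k : κ} {v : E} (hv : v ≠ 0)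
    (hmax : ∀ k', |P.normal k' v| ≤ P.normal k v) :
    ∃ x ∈ basisSimplex (P.facet k), P.facetVector k x = (P.normal k v)⁻¹ • v := by
  have hdual := dual_nonneg_of_abs_normal_le hmax
  have hpos : 0 < P.normal k v := by
    refine ((abs_nonneg _).trans (hmax k)).lt_of_ne fun h0 => hv ?_
    have hzero :=
      (Finset.sum_eq_zero_iff_of_nonneg fun c _ => hdual c).1 (by rw [sum_dual_apply, h0])
    rw [← P.sum_dual_smul_facetVertex k v]
    exact Finset.sum_eq_zero fun c hc => by rw [hzero c hc, zero_smul]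
  refine ⟨WithLp.toLp 2 fun c => P.dual k c v / P.normal k v,
    ⟨fun c => div_nonneg (hdual c) hpos.le, ?_, fun c hc => ?_⟩, ?_⟩
  · simp [← Finset.sum_div, sum_dual_apply, hpos.ne']
  · simp [dual_eq_zero (by simpa [mem_facet] using hc)]
  · simp [facetVector, div_eq_inv_mul, mul_smul, ← Finset.smul_sum, P.sum_dual_smul_facetVertex]

lemma continuous_facetVector [TopologicalSpace E] [ContinuousAdd E] [ContinuousSMul ℝ E] (k : κ) :
    Continuous (P.facetVector k) := by
  unfold facetVector
  fun_prop

variable {D : E →ₗ[ℝ] E} {π : Equiv.Perm V}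

lemma mem_basisSimplex_piLpCongrLeft {k k' : κ} {e : ℝ} (hD : Function.Injective D)
    (he : ∀ c, D (P.facetVertex k c) = e • P.facetVertex k' (π c)) {x : EuclideanSpace ℝ V}
    (hx : x ∈ basisSimplex (P.facet k)) :
    LinearIsometryEquiv.piLpCongrLeft 2 ℝ ℝ π x ∈ basisSimplex (P.facet k') := by
  refine ⟨fun c => by simpa using hx.1 _, ?_, fun c hc => ?_⟩
  · simpa [Equiv.sum_comp π.symm (fun c => x c)] using hx.2.1
  · refine (Equiv.piCongrLeft'_apply _ _ _ _).trans (eq_zero_of_mem_basisSimplex hx (hD ?_))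
    rw [he, π.apply_symm_apply, (by simpa [mem_facet] using hc : P.facetVertex k' c = 0),
      smul_zero, map_zero]

lemma smul_facetVector_piLpCongrLeft {k k' : κ} {e : ℝ}
    (he : ∀ c, D (P.facetVertex k c) = e • P.facetVertex k' (π c)) (x : EuclideanSpace ℝ V) :
    e • P.facetVector k' (LinearIsometryEquiv.piLpCongrLeft 2 ℝ ℝ π x) =
      D (P.facetVector k x) := by
  simp only [facetVector, map_sum, map_smul, he, Finset.smul_sum]
  rw [← Equiv.sum_comp π]
  simp [smul_comm e]

variable [DecidableEq V]

lemma exists_mem_basisSimplex (x : (facetComplex P.facet).space) :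
    ∃ k, (x : EuclideanSpace ℝ V) ∈ basisSimplex (P.facet k) :=
  (mem_facetComplex_space_iff P.facet).1 x.2

variable (P) in
noncomputable def radialMap (x : (facetComplex P.facet).space) : ℙ ℝ E :=
  Projectivization.mk ℝ _ (facetVector_ne_zero (exists_mem_basisSimplex x).choose_spec)

lemma radialMap_eq {x : (facetComplex P.facet).space} {k : κ}
    (hx : (x : EuclideanSpace ℝ V) ∈ basisSimplex (P.facet k)) :
    P.radialMap x = Projectivization.mk ℝ (P.facetVector k x) (facetVector_ne_zero hx) := by
  obtain ⟨e, he⟩ := exists_facetVector_eq_smul (exists_mem_basisSimplex x).choose_spec hx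
  exact (Projectivization.mk_eq_mk_iff' ℝ _ _ _ _).2 ⟨e, he.symm⟩

lemma radialMap_injective : Function.Injective P.radialMap := by
  intro x y h
  obtain ⟨k, hx⟩ := exists_mem_basisSimplex x
  obtain ⟨k', hy⟩ := exists_mem_basisSimplex y
  rw [radialMap_eq hx, radialMap_eq hy, Projectivization.mk_eq_mk_iff'] at h
  obtain ⟨a, ha⟩ := h
  exact Subtype.ext (eq_of_facetVector_eq_smul hx hy ha.symm)

lemma exists_radialMap_eq_mk {k : κ} {v : E} (hv : v ≠ 0)
    (hmax : ∀ k', |P.normal k' v| ≤ P.normal k v) :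
    ∃ x, P.radialMap x = Projectivization.mk ℝ v hv := by
  obtain ⟨x, hx, hxv⟩ := exists_mem_basisSimplex_facetVector_eq_smul hv hmax
  refine ⟨⟨x, (mem_facetComplex_space_iff P.facet).2 ⟨k, hx⟩⟩, ?_⟩
  rw [radialMap_eq hx, Projectivization.mk_eq_mk_iff']
  exact ⟨_, hxv.symm⟩

lemma radialMap_surjective [Fintype κ] [Nonempty κ] : Function.Surjective P.radialMap := by
  intro p
  induction p using Projectivization.ind with | h v hv =>
  obtain ⟨k, -, hk⟩ :=
    Finset.univ.exists_max_image (fun k => |P.normal k v|) Finset.univ_nonempty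
  rcases le_total 0 (P.normal k v) with hnonneg | hnonpos
  · exact exists_radialMap_eq_mk hv fun k' => by
      simpa [abs_of_nonneg hnonneg] using hk k' (Finset.mem_univ _)
  · obtain ⟨x, hx⟩ := exists_radialMap_eq_mk (neg_ne_zero.2 hv) (k := k) fun k' => by
      simpa [abs_of_nonpos hnonpos] using hk k' (Finset.mem_univ _)
    exact ⟨x, hx.trans ((Projectivization.mk_eq_mk_iff' ℝ _ _ _ _).2 ⟨-1, by simp⟩)⟩

lemma facetVector_single (k : κ) (c : V) :
    P.facetVector k (EuclideanSpace.single c 1) = P.facetVertex k c := by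
  simp [facetVector]

lemma exists_radialMap_eq_of_mem_vertices {x : (facetComplex P.facet).space}
    (hx : (x : EuclideanSpace ℝ V) ∈ (facetComplex P.facet).vertices) :
    ∃ c, ∃ hc : P.vertex c ≠ 0, P.radialMap x = Projectivization.mk ℝ (P.vertex c) hc := by
  obtain ⟨c, -, hxc⟩ := (facetComplex_vertices P.facet ▸ hx :)
  obtain ⟨k, hk⟩ := exists_mem_basisSimplex x
  have hck : P.facetVertex k c ≠ 0 := fun h0 => by
    simpa [← hxc] using eq_zero_of_mem_basisSimplex hk h0
  rw [radialMap_eq hk]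
  simp only [← hxc, facetVector_single]
  rcases P.facetVertex_eq k c with h | h | h
  · exact absurd h hck
  · exact ⟨c, h ▸ hck, by simp_rw [h]⟩
  · refine ⟨c, fun h0 => hck (by simp [h, h0]), ?_⟩
    exact (Projectivization.mk_eq_mk_iff' ℝ _ _ _ _).2 ⟨-1, by simp [h]⟩

lemma piLpCongrLeft_mem_space (hD : Function.Injective D)
    (hDπ : ∀ k, ∃ k', ∃ e : ℝ, ∀ c, D (P.facetVertex k c) = e • P.facetVertex k' (π c))
    (x : (facetComplex P.facet).space) :
    LinearIsometryEquiv.piLpCongrLeft 2 ℝ ℝ π x ∈ (facetComplex P.facet).space := by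
  obtain ⟨k, hx⟩ := exists_mem_basisSimplex x
  obtain ⟨k', e, he⟩ := hDπ k
  exact (mem_facetComplex_space_iff P.facet).2 ⟨k', mem_basisSimplex_piLpCongrLeft hD he hx⟩

lemma radialMap_piLpCongrLeft (hD : Function.Injective D)
    (hDπ : ∀ k, ∃ k', ∃ e : ℝ, ∀ c, D (P.facetVertex k c) = e • P.facetVertex k' (π c))
    (x : (facetComplex P.facet).space) :
    P.radialMap ⟨_, piLpCongrLeft_mem_space hD hDπ x⟩ =
      Projectivization.map D hD (P.radialMap x) := by
  obtain ⟨k, hx⟩ := exists_mem_basisSimplex x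
  obtain ⟨k', e, he⟩ := hDπ k
  rw [radialMap_eq (mem_basisSimplex_piLpCongrLeft hD he hx), radialMap_eq hx,
    Projectivization.map_mk, Projectivization.mk_eq_mk_iff']
  have he0 : e ≠ 0 := by
    rintro rfl
    exact facetVector_ne_zero hx (hD (by rw [← smul_facetVector_piLpCongrLeft he, zero_smul,
      map_zero]))
  exact ⟨e⁻¹, by rw [← smul_facetVector_piLpCongrLeft he, inv_smul_smul₀ he0]⟩

variable [TopologicalSpace E] [ContinuousAdd E] [ContinuousSMul ℝ E]

lemma continuous_radialMap [Finite κ] :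
    Continuous P.radialMap := by
  let C (k : κ) : Set (facetComplex P.facet).space :=
    {x | (x : EuclideanSpace ℝ V) ∈ basisSimplex (P.facet k)}
  refine (locallyFinite_of_finite C).continuous (Set.iUnion_eq_univ_iff.2 exists_mem_basisSimplex)
    (fun k => (isClosed_basisSimplex _).preimage continuous_subtype_val) fun k => ?_
  rw [continuousOn_iff_continuous_domRestrict]
  have hrestrict : (C k).domRestrict P.radialMap = fun x =>
      Projectivization.mk ℝ (P.facetVector k x.1) (facetVector_ne_zero x.2) :=
    funext fun x => radialMap_eq (x := x.1) x.2
  rw [hrestrict]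
  exact continuous_quot_mk.comp (((continuous_facetVector k).comp
    (continuous_subtype_val.comp continuous_subtype_val)).subtype_mk _)

variable [Fintype κ] [Nonempty κ] [T2Space (ℙ ℝ E)]

variable (P) in
noncomputable def radialHomeomorph : (facetComplex P.facet).space ≃ₜ ℙ ℝ E :=
  haveI := isCompact_iff_compactSpace.1
    (SimplicialComplex.isCompact_space (facetComplex_faces_finite P.facet))
  continuous_radialMap.homeoOfEquivCompactToT2
    (f := Equiv.ofBijective _ ⟨radialMap_injective, radialMap_surjective⟩)

lemma radialHomeomorph_symm_map (hD : Function.Injective D)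
    (hDπ : ∀ k, ∃ k', ∃ e : ℝ, ∀ c, D (P.facetVertex k c) = e • P.facetVertex k' (π c))
    (x : (facetComplex P.facet).space) :
    (P.radialHomeomorph.symm (Projectivization.map D hD (P.radialHomeomorph x)) :
      EuclideanSpace ℝ V) = LinearIsometryEquiv.piLpCongrLeft 2 ℝ ℝ π x := by
  rw [(Homeomorph.symm_apply_eq _).2 (radialMap_piLpCongrLeft hD hDπ x).symm]

lemma image_radialHomeomorph_conj (hD : Function.Injective D)
    (hDπ : ∀ k, ∃ k', ∃ e : ℝ, ∀ c, D (P.facetVertex k c) = e • P.facetVertex k' (π c))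
    {S : Finset V} {k : κ} (hSF : S ⊆ P.facet k) (hS : S.Nonempty) :
    (fun x : (facetComplex P.facet).space => (P.radialHomeomorph.symm
        (Projectivization.map D hD (P.radialHomeomorph x)) : EuclideanSpace ℝ V)) ''
      {x | (x : EuclideanSpace ℝ V) ∈
        convexHull ℝ ↑(S.image fun c => EuclideanSpace.single c (1 : ℝ))} =
      convexHull ℝ ↑((S.image π).image fun c => EuclideanSpace.single c (1 : ℝ)) := by
  have hface : convexHull ℝ ↑(S.image fun c => EuclideanSpace.single c (1 : ℝ)) ⊆
      (facetComplex P.facet).space :=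
    (facetComplex P.facet).convexHull_subset_space ⟨k, S, hSF, hS, rfl⟩
  rw [Set.image_congr fun x _ => radialHomeomorph_symm_map hD hDπ x]
  change (LinearIsometryEquiv.piLpCongrLeft 2 ℝ ℝ π ∘ Subtype.val) '' (Subtype.val ⁻¹' _) = _
  rw [Set.image_comp, Subtype.image_preimage_coe, Set.inter_eq_right.2 hface]
  rw [show ⇑(LinearIsometryEquiv.piLpCongrLeft 2 ℝ ℝ π) =
    (LinearIsometryEquiv.piLpCongrLeft 2 ℝ ℝ π).toLinearEquiv.toLinearMap from rfl,
    LinearMap.image_convexHull]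
  simp [Set.image_image]

end Polytope

section Triangulation

variable {κ E : Type*} [Fintype κ] [Nonempty κ] [AddCommGroup E] [Module ℝ E] [TopologicalSpace E]
  [ContinuousAdd E] [ContinuousSMul ℝ E] [T2Space (ℙ ℝ E)]
  {n : ℕ} (P : SymmetricSimplicialPolytope (Fin n) κ E)

noncomputable def triangulation : Triangulation (ℙ ℝ E) where
  dim := n
  complex := facetComplex P.facet
  finite_faces := facetComplex_faces_finite P.facet
  homeo := P.radialHomeomorph

lemma triangulation_homeo_apply (x : P.triangulation.complex.space) :
    P.triangulation.homeo x = P.radialMap x :=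
  rfl

lemma ncard_vertices_triangulation (hcover : ∀ c, ∃ k, P.facetVertex k c ≠ 0) :
    P.triangulation.complex.vertices.ncard = n := by
  change (facetComplex P.facet).vertices.ncard = n
  rw [facetComplex_vertices,
    Set.ncard_image_of_injective _ (EuclideanSpace.single_left_injective one_ne_zero)]
  simp [mem_facet, hcover]

theorem isEquivariant_triangulation {G : Type*} (D : G → E →ₗ[ℝ] E)
    (hD : ∀ g, Function.Injective (D g)) (π : G → Equiv.Perm (Fin n))
    (hDπ : ∀ g k, ∃ k', ∃ e : ℝ, ∀ c, D g (P.facetVertex k c) = e • P.facetVertex k' (π g c)) :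
    P.triangulation.IsEquivariant fun g => Projectivization.map (D g) (hD g) := by
  intro g s hs
  obtain ⟨k, S, hSF, hS, rfl⟩ := hs
  obtain ⟨k', e, he⟩ := hDπ g k
  refine ⟨(S.image (π g)).image fun c => EuclideanSpace.single c 1,
    ⟨k', S.image (π g), ?_, hS.image _, rfl⟩, ?_⟩
  · intro c hc
    obtain ⟨d, hd, rfl⟩ := Finset.mem_image.1 hc
    refine mem_facet.2 fun h0 => mem_facet.1 (hSF hd) (hD g ?_)
    rw [he, h0, smul_zero, map_zero]
  · exact image_radialHomeomorph_conj (hD g) (hDπ g) hSF hS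

end Triangulation

end SymmetricSimplicialPolytope

namespace HemiIcosahedron

def vertexZ : Fin 6 → Fin 3 → ℤ :=
  ![![0, 1, 2], ![0, 1, -2], ![2, 0, 1], ![-2, 0, 1], ![1, 2, 0], ![1, -2, 0]]

/-- The ten triangles of the hemi-icosahedron, each lifted to a face of the icosahedron. -/
def facetSign : Fin 10 → Fin 6 → ℤ :=
  ![![1, 0, 1, 0, 1, 0],
    ![1, -1, 1, 0, 0, 0],
    ![1, -1, 0, 1, 0, 0],
    ![1, 0, 0, 1, 0, -1],
    ![1, 0, 0, 0, 1, -1],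
    ![0, 1, 0, -1, 1, 0],
    ![0, 1, 0, 0, 1, -1],
    ![0, 1, -1, 0, 0, -1],
    ![0, 0, 1, -1, 1, 0],
    ![0, 0, 1, -1, 0, 1]]

def facetVertexZ (k : Fin 10) (c : Fin 6) : Fin 3 → ℤ := facetSign k c • vertexZ c

/-- `72` times the barycentric coordinate functionals of the facets (`72` clears the
determinants `8` and `9` of the facets). -/
def dualZ : Fin 10 → Fin 6 → Fin 3 → ℤ :=
  ![![![-16, 8, 32], 0, ![32, -16, 8], 0, ![8, 32, -16], 0],
    ![![-9, 36, 18], ![-9, -36, 18], ![36, 0, 0], 0, 0, 0],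
    ![![9, 36, 18], ![9, -36, 18], 0, ![-36, 0, 0], 0, 0],
    ![![16, 8, 32], 0, 0, ![-32, -16, 8], 0, ![-8, 32, -16]],
    ![![0, 0, 36], 0, 0, 0, ![36, 18, -9], ![-36, 18, -9]],
    ![0, ![-16, 8, -32], 0, ![32, -16, -8], ![8, 32, 16], 0],
    ![0, ![0, 0, -36], 0, 0, ![36, 18, 9], ![-36, 18, 9]],
    ![0, ![16, 8, -32], ![-32, -16, -8], 0, 0, ![-8, 32, 16]],
    ![0, 0, ![18, -9, 36], ![18, -9, -36], ![0, 36, 0], 0],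
    ![0, 0, ![18, 9, 36], ![18, 9, -36], 0, ![0, -36, 0]]]

def normalZ (k : Fin 10) : Fin 3 → ℤ := ∑ c, dualZ k c

def signZ (g : ZMod 2 × ZMod 2) : Fin 3 → ℤ :=
  ![1, if g.1 = 0 then 1 else -1, if g.2 = 0 then 1 else -1]

def vertexPerm (g : ZMod 2 × ZMod 2) : Equiv.Perm (Fin 6) :=
  (Equiv.swap 0 1 * Equiv.swap 4 5) ^ g.1.val * (Equiv.swap 0 1 * Equiv.swap 2 3) ^ g.2.val

lemma facetSign_eq : ∀ k c, facetSign k c = 0 ∨ facetSign k c = 1 ∨ facetSign k c = -1 := by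
  decide

lemma dualZ_dotProduct_facetVertexZ : ∀ k c d,
    dualZ k c ⬝ᵥ facetVertexZ k d = if c = d ∧ facetVertexZ k c ≠ 0 then 72 else 0 := by
  decide

lemma sum_dualZ_mul_facetVertexZ : ∀ k i j,
    ∑ c, dualZ k c i * facetVertexZ k c j = if i = j then 72 else 0 := by
  decide

lemma normalZ_dotProduct_facetVertexZ : ∀ k c,
    facetVertexZ k c ≠ 0 → normalZ k ⬝ᵥ facetVertexZ k c = 72 := by
  decide

lemma abs_normalZ_dotProduct_vertexZ_le : ∀ k c, |normalZ k ⬝ᵥ vertexZ c| ≤ 72 := by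
  decide

lemma facetVertexZ_eq_of_normalZ_dotProduct : ∀ k c,
    (normalZ k ⬝ᵥ vertexZ c = 72 → facetVertexZ k c = vertexZ c) ∧
      (normalZ k ⬝ᵥ vertexZ c = -72 → facetVertexZ k c = -vertexZ c) := by
  decide

lemma exists_facetVertexZ_eq_smul : ∀ k k', ∃ e ∈ ({1, -1} : Finset ℤ), ∀ c,
    facetVertexZ k c ≠ 0 → facetVertexZ k' c ≠ 0 → facetVertexZ k c = e • facetVertexZ k' c := by
  decide

lemma exists_neighborZ : ∀ k c, facetVertexZ k c ≠ 0 → ∃ k', ∃ s ∈ ({1, -1} : Finset ℤ),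
    (∀ d, d ≠ c → facetVertexZ k d ≠ 0 → s * (normalZ k' ⬝ᵥ facetVertexZ k d) = 72) ∧
      s * (normalZ k' ⬝ᵥ facetVertexZ k c) < 72 := by
  decide

lemma exists_signZ_mul_facetVertexZ : ∀ g k, ∃ k', ∃ e ∈ ({1, -1} : Finset ℤ), ∀ c j,
    signZ g j * facetVertexZ k c j = e * facetVertexZ k' (vertexPerm g c) j := by
  decide

lemma exists_facetVertexZ_ne_zero : ∀ c, ∃ k, facetVertexZ k c ≠ 0 := by
  decide

lemma exists_signZ_ne : ∀ c, ∃ g, ∃ i j,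
    vertexZ c i ≠ 0 ∧ vertexZ c j ≠ 0 ∧ signZ g i ≠ signZ g j := by
  decide

noncomputable def toReal : (Fin 3 → ℤ) →+* (Fin 3 → ℝ) := (Int.castRingHom ℝ).compLeft (Fin 3)

lemma toReal_injective : Function.Injective toReal :=
  Int.cast_injective.comp_left

lemma toReal_ne_zero {v : Fin 3 → ℤ} : toReal v ≠ 0 ↔ v ≠ 0 :=
  map_ne_zero_iff _ toReal_injective

noncomputable def dotDual (v : Fin 3 → ℤ) : Module.Dual ℝ (Fin 3 → ℝ) :=
  (72 : ℝ)⁻¹ • dotProductEquiv ℝ (Fin 3) (toReal v)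

lemma dotDual_toReal (v w : Fin 3 → ℤ) : dotDual v (toReal w) = (v ⬝ᵥ w : ℤ) / 72 := by
  simp [dotDual, toReal, dotProduct, div_eq_inv_mul]

lemma sum_dotDual_smul_toReal {m u : Fin 6 → Fin 3 → ℤ}
    (h : ∀ i j, ∑ c, m c i * u c j = if i = j then 72 else 0) (v : Fin 3 → ℝ) :
    ∑ c, dotDual (m c) v • toReal (u c) = v := by
  ext j
  have hcast (i : Fin 3) : ∑ c, (m c i : ℝ) * (u c j : ℝ) = if i = j then 72 else 0 := by
    exact_mod_cast h i j
  simp only [dotDual, toReal, LinearMap.smul_apply, dotProductEquiv_apply_apply, dotProduct,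
    Finset.sum_apply, Pi.smul_apply, smul_eq_mul, RingHom.compLeft_apply, Function.comp_apply,
    eq_intCast, Finset.mul_sum, Finset.sum_mul]
  calc ∑ c, ∑ i, 72⁻¹ * ((m c i : ℝ) * v i) * (u c j : ℝ)
      = ∑ i, 72⁻¹ * v i * ∑ c, (m c i : ℝ) * (u c j : ℝ) := by
        rw [Finset.sum_comm]
        simp only [Finset.mul_sum]
        exact Finset.sum_congr rfl fun i _ => Finset.sum_congr rfl fun c _ => by ring
    _ = v j := by simp [hcast]; ring

noncomputable def polytope : SymmetricSimplicialPolytope (Fin 6) (Fin 10) (Fin 3 → ℝ) where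
  vertex c := toReal (vertexZ c)
  facetVertex k c := toReal (facetVertexZ k c)
  dual k c := dotDual (dualZ k c)
  normal k := dotDual (normalZ k)
  facetVertex_eq k c := by
    rcases facetSign_eq k c with h | h | h <;> simp [facetVertexZ, h]
  dual_facetVertex k c d := by
    rw [dotDual_toReal, dualZ_dotProduct_facetVertexZ]
    by_cases hcd : c = d ∧ facetVertexZ k c ≠ 0
    · rw [if_pos hcd, if_pos ⟨hcd.1, toReal_ne_zero.2 hcd.2⟩]; norm_num
    · rw [if_neg hcd, if_neg fun h => hcd ⟨h.1, toReal_ne_zero.1 h.2⟩]; norm_num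
  sum_dual_smul_facetVertex k := sum_dotDual_smul_toReal (sum_dualZ_mul_facetVertexZ k)
  normal_facetVertex k c hc := by
    rw [dotDual_toReal, normalZ_dotProduct_facetVertexZ k c (toReal_ne_zero.1 hc)]
    norm_num
  abs_normal_vertex_le k c := by
    rw [dotDual_toReal, abs_div, abs_of_pos (by norm_num : (0 : ℝ) < 72), div_le_one (by norm_num)]
    exact_mod_cast abs_normalZ_dotProduct_vertexZ_le k c
  facetVertex_eq_of_normal_eq_one k c v hv h1 := by
    obtain ⟨hpos, hneg⟩ := facetVertexZ_eq_of_normalZ_dotProduct k c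
    rcases hv with rfl | rfl
    · rw [dotDual_toReal, div_eq_one_iff_eq (by norm_num)] at h1
      rw [hpos (by exact_mod_cast h1)]
    · rw [← map_neg, dotDual_toReal, div_eq_one_iff_eq (by norm_num)] at h1
      have h72 : normalZ k ⬝ᵥ -vertexZ c = 72 := by exact_mod_cast h1
      rw [hneg (by rw [dotProduct_neg] at h72; linarith), map_neg]
  exists_facetVertex_eq_smul k k' := by
    obtain ⟨e, -, he⟩ := exists_facetVertexZ_eq_smul k k'
    refine ⟨e, fun c hc hc' => ?_⟩
    rw [he c (toReal_ne_zero.1 hc) (toReal_ne_zero.1 hc'), map_zsmul, Int.cast_smul_eq_zsmul]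
  exists_neighbor k c hc := by
    obtain ⟨k', s, hs, hridge, hopp⟩ := exists_neighborZ k c (toReal_ne_zero.1 hc)
    refine ⟨k', s, ?_, fun d hdc hd => ?_, ?_⟩
    · rcases (by simpa using hs : s = 1 ∨ s = -1) with rfl | rfl <;> simp
    · rw [dotDual_toReal, mul_div_assoc', div_eq_one_iff_eq (by norm_num)]
      exact_mod_cast hridge d hdc (toReal_ne_zero.1 hd)
    · rw [dotDual_toReal, mul_div_assoc', div_lt_one (by norm_num)]
      exact_mod_cast hopp

lemma stdSign_eq_signZ (g : ZMod 2 × ZMod 2) (j : Fin 3) :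
    stdSign 2 ![g.1, g.2] j = signZ g j := by
  have hsgn (a : ZMod 2) : sgn a = ((if a = 0 then 1 else -1 : ℤ) : ℝ) := by
    unfold sgn; split_ifs <;> simp
  fin_cases j
  · simp [stdSign, signZ]
  · exact hsgn g.1
  · exact hsgn g.2

lemma isEquivariant_triangulation : polytope.triangulation.IsEquivariant rp2StdAction := by
  have hDπ (g : ZMod 2 × ZMod 2) (k : Fin 10) : ∃ k', ∃ e : ℝ, ∀ c,
      scaleEquiv _ (stdSign_ne_zero 2 ![g.1, g.2]) (polytope.facetVertex k c) =
        e • polytope.facetVertex k' (vertexPerm g c) := by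
    obtain ⟨k', e, -, he⟩ := exists_signZ_mul_facetVertexZ g k
    refine ⟨k', e, fun c => funext fun j => ?_⟩
    change stdSign 2 ![g.1, g.2] j * (facetVertexZ k c j : ℝ) =
      e * facetVertexZ k' (vertexPerm g c) j
    rw [stdSign_eq_signZ]
    exact_mod_cast he c j
  exact polytope.isEquivariant_triangulation _ (fun g => (scaleEquiv _ _).injective) _ hDπ

lemma ncard_vertices_triangulation :
    polytope.triangulation.complex.vertices.ncard = 6 :=
  polytope.ncard_vertices_triangulation fun c =>
    (exists_facetVertexZ_ne_zero c).imp fun _ hk => toReal_ne_zero.2 hk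

lemma exists_rp2StdAction_ne (c : Fin 6) (hc : polytope.vertex c ≠ 0) :
    ∃ g, rp2StdAction g (Projectivization.mk ℝ _ hc) ≠ Projectivization.mk ℝ _ hc := by
  obtain ⟨g, i, j, hi, hj, hij⟩ := exists_signZ_ne c
  refine ⟨g, Projectivization.map_scaleEquiv_mk_ne _ hc (i := i) (j := j) ?_ ?_ ?_⟩
  · change (vertexZ c i : ℝ) ≠ 0
    exact_mod_cast hi
  · change (vertexZ c j : ℝ) ≠ 0
    exact_mod_cast hj
  · rw [stdSign_eq_signZ, stdSign_eq_signZ]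
    exact_mod_cast hij

end HemiIcosahedron

/-- `ℝP²` with its standard `ℤ₂²`-action admits a `ℤ₂²`-equivariant triangulation with exactly
`6` vertices, none of which is a fixed point of the action. -/
theorem rp2_equivariant_triangulation_six_vertices_no_fixed_vertex :
    ∃ T : Triangulation (ℙ ℝ (Fin 3 → ℝ)), T.IsEquivariant rp2StdAction ∧
      T.complex.vertices.ncard = 6 ∧
      ∀ x : T.complex.space, (x : EuclideanSpace ℝ (Fin T.dim)) ∈ T.complex.vertices →
        ∃ g : ZMod 2 × ZMod 2, rp2StdAction g (T.homeo x) ≠ T.homeo x := by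
  refine ⟨HemiIcosahedron.polytope.triangulation, HemiIcosahedron.isEquivariant_triangulation,
    HemiIcosahedron.ncard_vertices_triangulation, fun x hx => ?_⟩
  obtain ⟨c, hc, hxc⟩ := SymmetricSimplicialPolytope.exists_radialMap_eq_of_mem_vertices hx
  rw [SymmetricSimplicialPolytope.triangulation_homeo_apply, hxc]
  exact HemiIcosahedron.exists_rp2StdAction_ne c hc
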